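/- Define {x} : [0,1) → [0,1/2) by {x} = x if x ∈ [0,1/2) and {x} = x - 1/2 otherwise. If x, y, z ∈ [0,1] satisfy 2y = x + z and (1-{x})² + (1-{z})² - 2(1-{y})² < 2((z-x)/2)², then min(x,z) < 1/2 ≤ y. -/

import Mathlib

/-!
Writing `(1 - {t})² = (1 - t)² + c t`, where the correction `c t` vanishes for `t < 1/2` and
equals `5/4 - t` otherwise, the parallelogram identity
`(1 - x)² + (1 - z)² - 2 (1 - y)² = 2 ((z - x)/2)²` for `2y = x + z` turns the hypothesis into
`c x + c z < 2 c y`. The corrections are nonnegative on `[0,1)`, so `c y ≠ 0`, i.e. `1/2 ≤ y`;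
and if `x, z ≥ 1/2` all three corrections are given by the same affine function, so equality holds.
-/

/-- The nonstandard fractional map `{·} : [0,1) → [0,1/2)`. -/
noncomputable def br (t : ℝ) : ℝ := if t < 1/2 then t else t - 1/2

noncomputable def brCorrection (t : ℝ) : ℝ := if t < 1/2 then 0 else 5/4 - t

lemma one_sub_br_sq (t : ℝ) : (1 - br t) ^ 2 = (1 - t) ^ 2 + brCorrection t := by
  unfold br brCorrection
  split_ifs <;> ring

lemma brCorrection_of_lt {t : ℝ} (ht : t < 1/2) : brCorrection t = 0 := if_pos ht

lemma brCorrection_of_le {t : ℝ} (ht : 1/2 ≤ t) : brCorrection t = 5/4 - t := if_neg ht.not_gt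

lemma brCorrection_nonneg {t : ℝ} (ht : t ≤ 5/4) : 0 ≤ brCorrection t := by
  unfold brCorrection
  split_ifs <;> linarith

lemma sq_sub_add_sq_sub_sub_two_mul_sq_sub_of_two_mul_eq_add {c x y z : ℝ} (h : 2 * y = x + z) :
    (c - x) ^ 2 + (c - z) ^ 2 - 2 * (c - y) ^ 2 = 2 * ((z - x) / 2) ^ 2 := by
  obtain rfl : y = (x + z) / 2 := by linarith
  ring

theorem bracket_law (x y z : ℝ)
    (hx : x ∈ Set.Ico (0:ℝ) 1) (hz : z ∈ Set.Ico (0:ℝ) 1)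
    (hap : 2 * y = x + z)
    (h : (1 - br x)^2 + (1 - br z)^2 - 2 * (1 - br y)^2 < 2 * ((z - x)/2)^2) :
    min x z < 1/2 ∧ 1/2 ≤ y := by
  have hcorr : brCorrection x + brCorrection z < 2 * brCorrection y := by
    rw [one_sub_br_sq, one_sub_br_sq, one_sub_br_sq,
      ← sq_sub_add_sq_sub_sub_two_mul_sq_sub_of_two_mul_eq_add (c := 1) hap] at h
    linarith
  have hy : 1/2 ≤ y := by
    by_contra! hy
    rw [brCorrection_of_lt hy] at hcorr
    linarith [brCorrection_nonneg (by linarith [hx.2] : x ≤ 5/4),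
      brCorrection_nonneg (by linarith [hz.2] : z ≤ 5/4)]
  refine ⟨?_, hy⟩
  by_contra! hmin
  rw [brCorrection_of_le (le_min_iff.mp hmin).1, brCorrection_of_le (le_min_iff.mp hmin).2,
    brCorrection_of_le hy] at hcorr
  linarith
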